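/- For every integer b > 4 with b ≡ 0 (mod 3) or b ≡ 2 (mod 3), there exists an integer a such that the matrices [[a, b],[b+1, 0]] and [[a+1, b],[b+1, 0]] are S-equivalent. -/

import Mathlib

open Matrix

/-- The column expansion of an `n × n` integer matrix `V` by a vector `u`:
the `(n+2) × (n+2)` matrix whose top-left `n × n` block is `V`, whose `(n+1)`-st row is
`(u 0, …, u (n-1), 0, 0)`, whose `(n+2)`-nd row is `(0, …, 0, 1, 0)`, and whose
remaining entries are `0`. -/
def colExpand {n : ℕ} (V : Matrix (Fin n) (Fin n) ℤ) (u : Fin n → ℤ) :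
    Matrix (Fin (n + 2)) (Fin (n + 2)) ℤ :=
  Matrix.of fun i j =>
    if hi : (i : ℕ) < n then
      if hj : (j : ℕ) < n then V ⟨i, hi⟩ ⟨j, hj⟩ else 0
    else if (i : ℕ) = n then
      if hj : (j : ℕ) < n then u ⟨j, hj⟩ else 0
    else
      if (j : ℕ) = n then 1 else 0

/-- The elementary moves of S-equivalence: unimodular congruence, column expansion
and row expansion (a row expansion of `V` is the transpose of a column expansion
of `Vᵀ`). -/
inductive SMove :
    (Σ n, Matrix (Fin n) (Fin n) ℤ) → (Σ n, Matrix (Fin n) (Fin n) ℤ) → Prop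
  | congruence {n : ℕ} (V P : Matrix (Fin n) (Fin n) ℤ) (hP : P.det = 1 ∨ P.det = -1) :
      SMove ⟨n, V⟩ ⟨n, P * V * Pᵀ⟩
  | colExp {n : ℕ} (V : Matrix (Fin n) (Fin n) ℤ) (u : Fin n → ℤ) :
      SMove ⟨n, V⟩ ⟨n + 2, colExpand V u⟩
  | rowExp {n : ℕ} (V : Matrix (Fin n) (Fin n) ℤ) (u : Fin n → ℤ) :
      SMove ⟨n, V⟩ ⟨n + 2, (colExpand Vᵀ u)ᵀ⟩

/-- Two square integer matrices are S-equivalent if they are related by a finite sequence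
of elementary moves and their inverses. -/
def SEquivalent {m n : ℕ} (V : Matrix (Fin m) (Fin m) ℤ) (W : Matrix (Fin n) (Fin n) ℤ) :
    Prop :=
  Relation.EqvGen SMove ⟨m, V⟩ ⟨n, W⟩

/-!
Expand `!![a, b; b + 1, 0]` by a column and `!![a + 1, b; b + 1, 0]` by a row. For
`b = 3m`, `a = 4m + 1` and for `b = 3m + 2`, `a = 2m + 2`, the two resulting `4 × 4` matrices
are congruent by an explicit unimodular matrix whose entries are affine in `m`.
-/

namespace SEquivalent

variable {m n k : ℕ} {U : Matrix (Fin m) (Fin m) ℤ} {V : Matrix (Fin n) (Fin n) ℤ}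
  {W : Matrix (Fin k) (Fin k) ℤ}

theorem symm (h : SEquivalent U V) : SEquivalent V U :=
  Relation.EqvGen.symm _ _ h

theorem trans (h₁ : SEquivalent U V) (h₂ : SEquivalent V W) : SEquivalent U W :=
  Relation.EqvGen.trans _ _ _ h₁ h₂

theorem congruence (V P : Matrix (Fin n) (Fin n) ℤ) (hP : P.det = 1 ∨ P.det = -1) :
    SEquivalent V (P * V * Pᵀ) :=
  Relation.EqvGen.rel _ _ (SMove.congruence V P hP)

theorem colExpand (V : Matrix (Fin n) (Fin n) ℤ) (u : Fin n → ℤ) :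
    SEquivalent V (_root_.colExpand V u) :=
  Relation.EqvGen.rel _ _ (SMove.colExp V u)

theorem rowExpand (V : Matrix (Fin n) (Fin n) ℤ) (u : Fin n → ℤ) :
    SEquivalent V (_root_.colExpand Vᵀ u)ᵀ :=
  Relation.EqvGen.rel _ _ (SMove.rowExp V u)

theorem of_congruence_colExpand_rowExpand {V W : Matrix (Fin n) (Fin n) ℤ} (u v : Fin n → ℤ)
    (P : Matrix (Fin (n + 2)) (Fin (n + 2)) ℤ) (hP : P.det = 1 ∨ P.det = -1)
    (h : P * _root_.colExpand V u * Pᵀ = (_root_.colExpand Wᵀ v)ᵀ) : SEquivalent V W :=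
  (colExpand V u).trans <| (congruence _ P hP).trans <| h ▸ (rowExpand W v).symm

end SEquivalent

theorem colExpand_fin_two (V : Matrix (Fin 2) (Fin 2) ℤ) (u : Fin 2 → ℤ) :
    colExpand V u =
      !![V 0 0, V 0 1, 0, 0; V 1 0, V 1 1, 0, 0; u 0, u 1, 0, 0; 0, 0, 1, 0] := by
  ext i j
  fin_cases i <;> fin_cases j <;> rfl

theorem transpose_colExpand_transpose_fin_two (V : Matrix (Fin 2) (Fin 2) ℤ) (u : Fin 2 → ℤ) :
    (colExpand Vᵀ u)ᵀ =
      !![V 0 0, V 0 1, u 0, 0; V 1 0, V 1 1, u 1, 0; 0, 0, 0, 1; 0, 0, 0, 0] := by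
  ext i j
  fin_cases i <;> fin_cases j <;> rfl

theorem sEquivalent_succ_of_three_mul (m : ℤ) :
    SEquivalent !![4 * m + 1, 3 * m; 3 * m + 1, 0] !![4 * m + 1 + 1, 3 * m; 3 * m + 1, 0] := by
  set P : Matrix (Fin 4) (Fin 4) ℤ :=
    !![-1, 1, 3 * m + 1, 2 * m + 2; 0, 3 * m, 0, 3 * m + 1; 0, 1, 0, 1;
      1, 2 * m - 1, -(3 * m), 0]
  have hP : P.det = -1 := by
    simp [P, det_succ_row_zero, Fin.sum_univ_succ, Fin.succAbove]
    ring
  refine .of_congruence_colExpand_rowExpand ![2 * m + 1, 1] ![1, 0] P (.inr hP) ?_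
  rw [colExpand_fin_two, transpose_colExpand_transpose_fin_two]
  ext i j
  fin_cases i <;> fin_cases j <;> simp [P, mul_apply, Fin.sum_univ_four] <;> ring

theorem sEquivalent_succ_of_three_mul_add_two (m : ℤ) :
    SEquivalent !![2 * m + 2, 3 * m + 2; 3 * m + 2 + 1, 0]
      !![2 * m + 2 + 1, 3 * m + 2; 3 * m + 2 + 1, 0] := by
  set P : Matrix (Fin 4) (Fin 4) ℤ :=
    !![-1, 1, 3 * m + 3, m + 2; 0, 3 * m + 2, 0, 3 * m + 3; 0, -1, 0, -1;
      -1, -m, 3 * m + 2, 0]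
  have hP : P.det = -1 := by
    simp [P, det_succ_row_zero, Fin.sum_univ_succ, Fin.succAbove]
    ring
  refine .of_congruence_colExpand_rowExpand ![m + 1, 1] ![-1, 0] P (.inr hP) ?_
  rw [colExpand_fin_two, transpose_colExpand_transpose_fin_two]
  ext i j
  fin_cases i <;> fin_cases j <;> simp [P, mul_apply, Fin.sum_univ_four] <;> ring

theorem stmt_4_general (b : ℤ) (h3 : b % 3 = 0 ∨ b % 3 = 2) :
    ∃ a : ℤ, SEquivalent !![a, b; b + 1, 0] !![a + 1, b; b + 1, 0] := by
  rcases h3 with h3 | h3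
  · obtain ⟨m, rfl⟩ : ∃ m, b = 3 * m := ⟨b / 3, by omega⟩
    exact ⟨_, sEquivalent_succ_of_three_mul m⟩
  · obtain ⟨m, rfl⟩ : ∃ m, b = 3 * m + 2 := ⟨b / 3, by omega⟩
    exact ⟨_, sEquivalent_succ_of_three_mul_add_two m⟩

theorem stmt_4 (b : ℤ) (hb : b > 4) (h3 : b % 3 = 0 ∨ b % 3 = 2) :
    ∃ a : ℤ, SEquivalent !![a, b; b + 1, 0] !![a + 1, b; b + 1, 0] :=
  stmt_4_general b h3
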